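/- arXiv:1001.4260 — 12 statements merged into one kernel-verified Lean document; each statement's English description precedes it below -/
import Mathlib

section
/- In any hyperring extension R of the Krasner hyperfield K, for elements a, b ∈ R one has a ∈ a + b if and only if b ∈ {0, a}. -/
universe u

structure CHG (α : Type u) where
  zero : α
  hadd : α → α → Set α
  neg : α → α
  hadd_nonempty : ∀ a b, (hadd a b).Nonempty
  hadd_comm : ∀ a b, hadd a b = hadd b a
  hadd_assoc : ∀ a b c, (⋃ x ∈ hadd a b, hadd x c) = ⋃ y ∈ hadd b c, hadd a y
  zero_hadd : ∀ a, hadd zero a = {a}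
  zero_mem_hadd_neg : ∀ a, zero ∈ hadd a (neg a)
  neg_unique : ∀ a b, zero ∈ hadd a b → b = neg a
  reversible : ∀ a b c, a ∈ hadd b c → c ∈ hadd a (neg b)

structure Hyperring (α : Type u) extends CHG α where
  one : α
  mul : α → α → α
  mul_assoc : ∀ a b c, mul (mul a b) c = mul a (mul b c)
  one_mul : ∀ a, mul one a = a
  mul_one : ∀ a, mul a one = a
  left_distrib : ∀ a b c, (mul a) '' (hadd b c) = hadd (mul a b) (mul a c)
  right_distrib : ∀ a b c, (fun x => mul x c) '' (hadd a b) = hadd (mul a c) (mul b c)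
  zero_mul : ∀ a, mul zero a = zero
  mul_zero : ∀ a, mul a zero = zero
  zero_ne_one : zero ≠ one

/-- In any hyperring extension `R` of the Krasner hyperfield `K`,
`a ∈ a + b` if and only if `b ∈ {0, a}`. -/
theorem stmt1 {α : Type u} (H : Hyperring α)
    (hK : H.hadd H.one H.one = {H.zero, H.one}) :
    ∀ a b : α, a ∈ H.hadd a b ↔ b ∈ ({H.zero, a} : Set α) := by
  intro a b
  have hxx : H.hadd a a = {H.zero, a} := by
    have h1 := H.left_distrib a H.one H.one
    rw [hK, H.mul_one] at h1
    rw [← h1]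
    ext y
    simp [Set.image_insert_eq, H.mul_zero, H.mul_one]
  have hneg : H.neg a = a := by
    have h0 : H.zero ∈ H.hadd a a := by rw [hxx]; exact Set.mem_insert _ _
    exact (H.neg_unique a a h0).symm
  constructor
  · intro h
    have := H.reversible a a b h
    rwa [hneg, hxx] at this
  · intro h
    rcases h with h | h
    · subst h
      rw [H.hadd_comm, H.zero_hadd]
      rfl
    · subst h
      rw [hxx]
      exact Set.mem_insert_of_mem _ rfl
end

section
/- There is no hyperfield extension of the Krasner hyperfield K of cardinality 3. -/
universe u

structure Hyperfield (α : Type u) extends Hyperring α where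
  exists_inv : ∀ a, a ≠ zero → ∃ b, mul a b = one ∧ mul b a = one

/-- There is no hyperfield extension of the Krasner hyperfield `K` of cardinality 3. -/
theorem stmt2 {α : Type u} (H : Hyperfield α)
    (hK : H.hadd H.one H.one = {H.zero, H.one}) :
    Nat.card α ≠ 3 := by
  intro hcard
  have hfin : Finite α := Nat.finite_of_card_ne_zero (by omega)
  have h01 := H.zero_ne_one
  -- get a third element
  obtain ⟨a, ha0, ha1⟩ : ∃ a : α, a ≠ H.zero ∧ a ≠ H.one := by
    by_contra h
    push_neg at h
    have hsub : (Set.univ : Set α) ⊆ {H.zero, H.one} := by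
      intro x _
      by_cases hx : x = H.zero
      · exact Or.inl hx
      · exact Or.inr (h x hx)
    have : Nat.card α ≤ 2 := by
      calc Nat.card α = (Set.univ : Set α).ncard := (Set.ncard_univ α).symm
        _ ≤ ({H.zero, H.one} : Set α).ncard := Set.ncard_le_ncard hsub (Set.toFinite _)
        _ ≤ ({H.one} : Set α).ncard + 1 := Set.ncard_insert_le _ _
        _ = 2 := by rw [Set.ncard_singleton]
    omega
  -- everything is 0, 1 or a
  have huniv : ∀ x : α, x = H.zero ∨ x = H.one ∨ x = a := by
    have hcard3 : ({H.zero, H.one, a} : Set α).ncard = 3 := by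
      rw [Set.ncard_insert_of_notMem (by simp [h01, Ne.symm ha0]),
        Set.ncard_insert_of_notMem (by simp [Ne.symm ha1]), Set.ncard_singleton]
    have heq : ({H.zero, H.one, a} : Set α) = Set.univ := by
      apply Set.eq_of_subset_of_ncard_le (Set.subset_univ _)
      rw [Set.ncard_univ, hcard, hcard3]
    intro x
    have : x ∈ ({H.zero, H.one, a} : Set α) := heq ▸ Set.mem_univ x
    simpa using this
  -- neg 1 = 1
  have neg1 : H.one = H.neg H.one :=
    H.neg_unique H.one H.one (by rw [hK]; exact Set.mem_insert _ _)
  -- 0 ∉ 1 + a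
  have h0not : H.zero ∉ H.hadd H.one a := by
    intro h
    have := H.neg_unique H.one a h
    rw [← neg1] at this
    exact ha1 this
  -- 1 ∉ 1 + a
  have h1not : H.one ∉ H.hadd H.one a := by
    intro h
    have := H.reversible H.one H.one a h
    rw [← neg1, hK] at this
    rcases this with h | h
    · exact ha0 h
    · exact ha1 h
  -- a + a = {0, a}
  have aa : H.hadd a a = {H.zero, a} := by
    have h := H.left_distrib a H.one H.one
    rw [hK, H.mul_one, Set.image_pair, H.mul_zero, H.mul_one] at h
    exact h.symm
  -- 1 + a = {a} essentially
  obtain ⟨x, hx⟩ := H.hadd_nonempty H.one a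
  have hxa : x = a := by
    rcases huniv x with h | h | h
    · exact absurd (h ▸ hx) h0not
    · exact absurd (h ▸ hx) h1not
    · exact h
  subst hxa
  -- use associativity (1+a)+a = 1+(a+a)
  have hmem : H.zero ∈ ⋃ y ∈ H.hadd H.one x, H.hadd y x :=
    Set.mem_biUnion hx (by rw [aa]; exact Set.mem_insert _ _)
  rw [H.hadd_assoc] at hmem
  obtain ⟨y, hy, hzy⟩ := Set.mem_iUnion₂.mp hmem
  rw [aa] at hy
  rcases hy with hy | hy
  · subst hy
    rw [H.hadd_comm, H.zero_hadd] at hzy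
    exact h01 hzy
  · subst hy
    exact h0not hzy
end

section
/- There is no hyperfield extension of the Krasner hyperfield K of cardinality 4. -/
universe u

/-- There is no hyperfield extension of the Krasner hyperfield `K` of cardinality 4. -/
theorem stmt3 {α : Type u} (H : Hyperfield α)
    (hK : H.hadd H.one H.one = {H.zero, H.one}) :
    Nat.card α ≠ 4 := by
  intro h4
  classical
  have hfin : Finite α := Nat.finite_of_card_ne_zero (by omega)
  have hfint := Fintype.ofFinite α
  have hcard : Fintype.card α = 4 := by rw [← Nat.card_eq_fintype_card, h4]
  -- x + x = {0, x}
  have hself : ∀ x : α, H.hadd x x = {H.zero, x} := by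
    intro x
    have h := H.left_distrib x H.one H.one
    rw [hK, H.mul_one] at h
    rw [← h, Set.image_insert_eq, Set.image_singleton, H.mul_zero, H.mul_one]
  have hneg : ∀ x : α, H.neg x = x := by
    intro x
    exact (H.neg_unique x x (by rw [hself]; left; rfl)).symm
  -- for c ∉ {0,1}, elements of 1+c avoid 0, 1, c
  have key : ∀ c : α, c ≠ H.zero → c ≠ H.one →
      ∀ y ∈ H.hadd H.one c, y ≠ H.zero ∧ y ≠ H.one ∧ y ≠ c := by
    intro c hc0 hc1 y hy
    refine ⟨?_, ?_, ?_⟩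
    · rintro rfl
      have := H.neg_unique H.one c hy
      rw [hneg] at this
      exact hc1 this
    · rintro rfl
      have := H.reversible H.one H.one c hy
      rw [hneg, hK] at this
      rcases this with h | h
      · exact hc0 h
      · exact hc1 h
    · rintro rfl
      rw [H.hadd_comm] at hy
      have := H.reversible y y H.one hy
      rw [hneg, hself] at this
      rcases this with h | h
      · exact H.zero_ne_one h.symm
      · exact hc1 h.symm
  -- find a ∉ {0,1}
  obtain ⟨a, ha0, ha1⟩ : ∃ a : α, a ≠ H.zero ∧ a ≠ H.one := by
    by_contra h
    push_neg at h
    have hsub : (Finset.univ : Finset α) ⊆ {H.zero, H.one} := by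
      intro x _
      simp only [Finset.mem_insert, Finset.mem_singleton]
      rcases eq_or_ne x H.zero with h' | h'
      · exact Or.inl h'
      · exact Or.inr (h x h')
    have h1 := Finset.card_le_card hsub
    have h2 : ({H.zero, H.one} : Finset α).card ≤ 2 :=
      (Finset.card_insert_le _ _).trans (by simp)
    rw [Finset.card_univ, hcard] at h1
    omega
  -- pick b ∈ 1 + a
  obtain ⟨b, hb⟩ := H.hadd_nonempty H.one a
  obtain ⟨hb0, hb1, hba⟩ := key a ha0 ha1 b hb
  -- associativity: b ∈ (1+1)+a = 1+(1+a)
  have hassoc := H.hadd_assoc H.one H.one a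
  have hbL : b ∈ ⋃ x ∈ H.hadd H.one H.one, H.hadd x a := by
    rw [hK]
    exact Set.mem_biUnion (Or.inr rfl) hb
  rw [hassoc] at hbL
  simp only [Set.mem_iUnion, exists_prop] at hbL
  obtain ⟨y, hy, hby⟩ := hbL
  obtain ⟨hy0, hy1, hya⟩ := key a ha0 ha1 y hy
  -- y = b since card α = 4
  have hyb : y = b := by
    by_contra hyb
    have h5 : ({H.zero, H.one, a, y, b} : Finset α).card = 5 := by
      rw [Finset.card_insert_of_notMem (by simp [H.zero_ne_one, Ne.symm ha0, Ne.symm hy0, Ne.symm hb0]),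
          Finset.card_insert_of_notMem (by simp [Ne.symm ha1, Ne.symm hy1, Ne.symm hb1]),
          Finset.card_insert_of_notMem (by simp [Ne.symm hya, Ne.symm hba]),
          Finset.card_insert_of_notMem (by simp [hyb]),
          Finset.card_singleton]
    have := Finset.card_le_univ ({H.zero, H.one, a, y, b} : Finset α)
    rw [h5, hcard] at this
    omega
  subst hyb
  -- b ∈ 1 + b is impossible
  obtain ⟨_, _, hbb⟩ := key y hy0 hy1 y hby
  exact hbb rfl
end

section
/- In any hyperring extension R of the sign hyperfield S, for elements a, b ∈ R one has a ∈ a + b if and only if b ∈ {0, a, −a}. -/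
universe u

/-- `R` contains the sign hyperfield `S` as a sub-hyperring: the elements `1`, `-1`, `0`
are distinct and satisfy the sign rules. -/
def ContainsS {α : Type u} (H : Hyperring α) : Prop :=
  H.neg H.one ≠ H.one ∧
  H.hadd H.one H.one = {H.one} ∧
  H.hadd (H.neg H.one) (H.neg H.one) = {H.neg H.one} ∧
  H.hadd H.one (H.neg H.one) = {H.neg H.one, H.zero, H.one}

/-- In any hyperring extension `R` of the sign hyperfield `S`,
`a ∈ a + b` if and only if `b ∈ {0, a, -a}`. -/
theorem stmt4 {α : Type u} (H : Hyperring α) (hS : ContainsS H) :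
    ∀ a b : α, a ∈ H.hadd a b ↔ b ∈ ({H.zero, a, H.neg a} : Set α) := by
  obtain ⟨h1, h11, hm, hpm⟩ := hS
  -- mul (neg one) a = neg a
  have hmulneg : ∀ a : α, H.mul (H.neg H.one) a = H.neg a := by
    intro a
    apply H.neg_unique
    have := H.right_distrib H.one (H.neg H.one) a
    rw [hpm, H.one_mul] at this
    have hz : H.zero ∈ (fun x => H.mul x a) '' ({H.neg H.one, H.zero, H.one} : Set α) := by
      refine ⟨H.zero, by simp, H.zero_mul a⟩
    rw [this] at hz
    exact hz
  have haddneg : ∀ a : α, H.hadd a (H.neg a) = {H.neg a, H.zero, a} := by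
    intro a
    have := H.right_distrib H.one (H.neg H.one) a
    rw [hpm, H.one_mul, hmulneg] at this
    rw [← this]
    ext x
    simp [Set.image, hmulneg, H.zero_mul, H.one_mul]
    tauto
  have haddself : ∀ a : α, H.hadd a a = {a} := by
    intro a
    have := H.right_distrib H.one H.one a
    rw [h11, H.one_mul] at this
    rw [← this]
    simp [H.one_mul]
  intro a b
  constructor
  · intro h
    have := H.reversible a a b h
    rw [haddneg] at this
    simp at this ⊢
    tauto
  · intro h
    simp at h
    rcases h with h | h | h
    · subst h; rw [H.hadd_comm, H.zero_hadd]; rfl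
    · subst h; rw [haddself]; rfl
    · subst h; rw [haddneg]; simp
end

section
/- Let R be a commutative ring and G ⊆ R× a subgroup of the units with G ≠ {1}. The quotient hyperring R/G contains the Krasner hyperfield K as a sub-hyperfield if and only if G ∪ {0} is a subfield of R. -/
universe u

/-- The class of `x` in the quotient of `R` by the multiplicative action of `G ⊆ Rˣ`. -/
def omk (R : Type u) [CommRing R] (G : Subgroup Rˣ) (x : R) :
    Quotient (MulAction.orbitRel G R) :=
  Quotient.mk _ x

/-- A subset `S` of a commutative ring is a subfield: a subring all of whose nonzero
elements are invertible within `S`. -/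
def IsSubfieldSet {R : Type u} [CommRing R] (S : Set R) : Prop :=
  (0 : R) ∈ S ∧ (1 : R) ∈ S ∧ (∀ a ∈ S, ∀ b ∈ S, a + b ∈ S) ∧ (∀ a ∈ S, -a ∈ S) ∧
  (∀ a ∈ S, ∀ b ∈ S, a * b ∈ S) ∧ ∀ a ∈ S, a ≠ 0 → ∃ b ∈ S, a * b = 1

lemma omk_eq_one_iff {R : Type u} [CommRing R] (G : Subgroup Rˣ) (a : R) :
    omk R G a = omk R G 1 ↔ ∃ g ∈ G, ((g : Rˣ) : R) = a := by
  rw [omk, omk, Quotient.eq]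
  change a ∈ MulAction.orbit G (1:R) ↔ _
  constructor
  · rintro ⟨⟨g, hg⟩, rfl⟩
    exact ⟨g, hg, by simp [Units.smul_def]⟩
  · rintro ⟨g, hg, rfl⟩
    exact ⟨⟨g, hg⟩, by simp [Units.smul_def]⟩

lemma omk_eq_zero_iff {R : Type u} [CommRing R] (G : Subgroup Rˣ) (a : R) :
    omk R G a = omk R G 0 ↔ a = 0 := by
  rw [omk, omk, Quotient.eq]
  change a ∈ MulAction.orbit G (0:R) ↔ _
  constructor
  · rintro ⟨g, rfl⟩; simp [Units.smul_def]
  · rintro rfl; exact ⟨1, by simp⟩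


/-- For `G ≠ {1}` a subgroup of the units of a commutative ring `R`, the quotient hyperring
`R/G` contains the Krasner hyperfield `K` as a sub-hyperfield (i.e. `1 + 1 = {0, 1}` holds in
`R/G`) if and only if `G ∪ {0}` is a subfield of `R`. -/
theorem stmt6 (R : Type u) [CommRing R] (G : Subgroup Rˣ) (hG : G ≠ ⊥) :
    ({c : Quotient (MulAction.orbitRel G R) |
        ∃ a b : R, omk R G a = omk R G 1 ∧ omk R G b = omk R G 1 ∧ c = omk R G (a + b)}
      = {omk R G 0, omk R G 1}) ↔
    IsSubfieldSet (insert (0 : R) ((fun u : Rˣ => (u : R)) '' (G : Set Rˣ))) := by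
  set S : Set R := insert (0 : R) ((fun u : Rˣ => (u : R)) '' (G : Set Rˣ)) with hSdef
  have hmemS : ∀ x : R, x ∈ S ↔ x = 0 ∨ ∃ g ∈ G, ((g : Rˣ) : R) = x := by
    intro x
    simp [hSdef, Set.mem_insert_iff, Set.mem_image, eq_comm]
  obtain ⟨⟨g₀, hg₀⟩, hg₀ne⟩ := Subgroup.ne_bot_iff_exists_ne_one.mp hG
  have hg₀ne' : g₀ ≠ 1 := fun h => hg₀ne (by ext; simp [h])
  constructor
  · intro h
    -- forward: set equality → subfield
    have hneg1 : ∃ u ∈ G, ((u : Rˣ) : R) = -1 := by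
      have h0 : omk R G 0 ∈ {c : Quotient (MulAction.orbitRel G R) |
          ∃ a b : R, omk R G a = omk R G 1 ∧ omk R G b = omk R G 1 ∧ c = omk R G (a + b)} := by
        rw [h]; left; rfl
      obtain ⟨a, b, ha, hb, hab⟩ := h0
      obtain ⟨ga, hga, rfl⟩ := (omk_eq_one_iff G a).mp ha
      obtain ⟨gb, hgb, rfl⟩ := (omk_eq_one_iff G b).mp hb
      have hz : ((ga : Rˣ) : R) + ((gb : Rˣ) : R) = 0 :=
        (omk_eq_zero_iff G _).mp hab.symm
      have hgb' : gb = -ga := Units.ext (by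
        rw [Units.val_neg]; exact eq_neg_of_add_eq_zero_right hz)
      refine ⟨gb * ga⁻¹, G.mul_mem hgb (G.inv_mem hga), ?_⟩
      rw [hgb']; push_cast; simp
    refine ⟨Set.mem_insert _ _, (hmemS 1).mpr (Or.inr ⟨1, G.one_mem, rfl⟩), ?_, ?_, ?_, ?_⟩
    · -- add
      intro a ha b hb
      rcases (hmemS a).mp ha with rfl | ⟨ga, hga, rfl⟩
      · simpa using hb
      rcases (hmemS b).mp hb with rfl | ⟨gb, hgb, rfl⟩
      · simpa using ha
      have hmem : omk R G ((ga : R) + (gb : R)) ∈ ({omk R G 0, omk R G 1} :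
          Set (Quotient (MulAction.orbitRel G R))) := by
        rw [← h]
        exact ⟨_, _, (omk_eq_one_iff G _).mpr ⟨ga, hga, rfl⟩,
          (omk_eq_one_iff G _).mpr ⟨gb, hgb, rfl⟩, rfl⟩
      rcases hmem with h0 | h1
      · exact (hmemS _).mpr (Or.inl ((omk_eq_zero_iff G _).mp h0))
      · exact (hmemS _).mpr (Or.inr ((omk_eq_one_iff G _).mp h1))
    · -- neg
      intro a ha
      rcases (hmemS a).mp ha with rfl | ⟨ga, hga, rfl⟩
      · simp [hmemS]
      obtain ⟨u, hu, hu1⟩ := hneg1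
      refine (hmemS _).mpr (Or.inr ⟨u * ga, G.mul_mem hu hga, ?_⟩)
      push_cast; rw [hu1]; ring
    · -- mul
      intro a ha b hb
      rcases (hmemS a).mp ha with rfl | ⟨ga, hga, rfl⟩
      · simp [hmemS]
      rcases (hmemS b).mp hb with rfl | ⟨gb, hgb, rfl⟩
      · simp [hmemS]
      exact (hmemS _).mpr (Or.inr ⟨ga * gb, G.mul_mem hga hgb, by push_cast; ring⟩)
    · -- inv
      intro a ha hane
      rcases (hmemS a).mp ha with rfl | ⟨ga, hga, rfl⟩
      · exact absurd rfl hane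
      exact ⟨(ga⁻¹ : Rˣ), (hmemS _).mpr (Or.inr ⟨ga⁻¹, G.inv_mem hga, rfl⟩), by
        exact ga.mul_inv⟩
  · rintro ⟨h0, h1, hadd, hneg, hmul, hinv⟩
    have hnt : (1 : R) ≠ 0 := by
      intro h10
      exact hg₀ne' (Units.ext (by
        have : (g₀ : R) = 0 := by
          calc (g₀ : R) = (g₀ : R) * 1 := by ring
          _ = 0 := by rw [h10]; ring
        simp [this, h10]))
    have hneg1 : ∃ u ∈ G, ((u : Rˣ) : R) = -1 := by
      have := hneg 1 h1
      rcases (hmemS (-1)).mp this with h | ⟨u, hu, hu1⟩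
      · exact absurd (neg_eq_zero.mp h) hnt
      · exact ⟨u, hu, hu1⟩
    ext c
    constructor
    · rintro ⟨a, b, ha, hb, rfl⟩
      obtain ⟨ga, hga, rfl⟩ := (omk_eq_one_iff G a).mp ha
      obtain ⟨gb, hgb, rfl⟩ := (omk_eq_one_iff G b).mp hb
      have hsum : ((ga:R) + (gb:R)) ∈ S :=
        hadd _ ((hmemS _).mpr (Or.inr ⟨ga, hga, rfl⟩)) _ ((hmemS _).mpr (Or.inr ⟨gb, hgb, rfl⟩))
      rcases (hmemS _).mp hsum with h0' | ⟨u, hu, hu1⟩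
      · left; exact (omk_eq_zero_iff G _).mpr h0'
      · right; exact (omk_eq_one_iff G _).mpr ⟨u, hu, hu1⟩
    · rintro (rfl | rfl)
      · -- omk 0 is attained
        obtain ⟨u, hu, hu1⟩ := hneg1
        exact ⟨1, (u : R), (omk_eq_one_iff G _).mpr ⟨1, G.one_mem, rfl⟩,
          (omk_eq_one_iff G _).mpr ⟨u, hu, rfl⟩, by
            rw [hu1]; congr 1; ring⟩
      · -- omk 1 is attained
        by_cases h2 : (1 : R) + 1 = 0
        · -- char 2 case: use 1 + g₀
          have hg0R : ((g₀ : Rˣ) : R) ≠ -1 := by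
            intro hc
            apply hg₀ne'
            apply Units.ext
            have h11 : (-1 : R) = 1 := neg_eq_of_add_eq_zero_left h2
            simp only [hc, h11, Units.val_one]
          have hsum : (1 : R) + (g₀ : R) ∈ S :=
            hadd _ h1 _ ((hmemS _).mpr (Or.inr ⟨g₀, hg₀, rfl⟩))
          rcases (hmemS _).mp hsum with h0' | ⟨u, hu, hu1⟩
          · exact absurd (eq_neg_of_add_eq_zero_right h0') hg0R
          · exact ⟨1, (g₀ : R), (omk_eq_one_iff G _).mpr ⟨1, G.one_mem, rfl⟩,
              (omk_eq_one_iff G _).mpr ⟨g₀, hg₀, rfl⟩,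
              ((omk_eq_one_iff G _).mpr ⟨u, hu, hu1⟩).symm⟩
        · -- 2 ≠ 0: use 1 + 1
          have hsum : (1 : R) + 1 ∈ S := hadd _ h1 _ h1
          rcases (hmemS _).mp hsum with h0' | ⟨u, hu, hu1⟩
          · exact absurd h0' h2
          · exact ⟨1, 1, (omk_eq_one_iff G _).mpr ⟨1, G.one_mem, rfl⟩,
              (omk_eq_one_iff G _).mpr ⟨1, G.one_mem, rfl⟩,
              ((omk_eq_one_iff G _).mpr ⟨u, hu, hu1⟩).symm⟩
end

section
/- A homomorphism of hyperrings from a commutative ring R to the sign hyperfield S is uniquely determined by its kernel p, which is a prime ideal of R, together with a total order on the field of fractions of R/p making it an ordered field. -/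
universe u

/-- Hyperaddition of the sign hyperfield `S = {-1, 0, 1}`. -/
def Shadd : SignType → SignType → Set SignType
  | .zero, y => {y}
  | x, .zero => {x}
  | .pos, .pos => {.pos}
  | .neg, .neg => {.neg}
  | .pos, .neg => {.neg, .zero, .pos}
  | .neg, .pos => {.neg, .zero, .pos}

/-- `f` is a hyperring homomorphism from the commutative ring `R` to the sign hyperfield `S`. -/
def IsHomToS (R : Type u) [CommRing R] (f : R → SignType) : Prop :=
  f 0 = 0 ∧ f 1 = 1 ∧ (∀ a b : R, f (a * b) = f a * f b) ∧
    ∀ a b : R, f (a + b) ∈ Shadd (f a) (f b)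

/-- `P` is the positive cone of a total (field) order: closed under addition and
multiplication, not containing `0`, and containing exactly one of `a`, `-a` for `a ≠ 0`. -/
def IsOrderCone {K : Type u} [CommRing K] (P : Set K) : Prop :=
  (∀ a ∈ P, ∀ b ∈ P, a + b ∈ P) ∧ (∀ a ∈ P, ∀ b ∈ P, a * b ∈ P) ∧ (0 : K) ∉ P ∧
    (∀ a : K, a ≠ 0 → a ∈ P ∨ -a ∈ P) ∧ ∀ a : K, ¬(a ∈ P ∧ -a ∈ P)

private lemma Shadd_zero (y : SignType) : Shadd 0 y = {y} := by cases y <;> rfl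
private lemma Shadd_pp : Shadd .pos .pos = {.pos} := rfl
private lemma Shadd_nn : Shadd .neg .neg = {.neg} := rfl

private lemma sgn1 : ∀ a b : SignType, a * b = 1 → a ≠ 0 ∧ b ≠ 0 := by decide
private lemma sgn2 : ∀ a b c d : SignType, b ≠ 0 → d ≠ 0 → d * a = b * c → a * b = c * d := by
  decide
private lemma sgn3 : ∀ a b c d : SignType, a * b = 1 → c * d = 1 →
    a * d = c * b ∧ a * d ≠ 0 ∧ a * d * (b * d) = 1 := by decide
private lemma sgn4 : ∀ a b c d : SignType, a * b = 1 → c * d = 1 → (a * c) * (b * d) = 1 := by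
  decide
private lemma sgn5 : ∀ a b : SignType, a ≠ 0 → b ≠ 0 → a * b = 1 ∨ (-a) * b = 1 := by decide
private lemma sgn6 : ∀ a b x : SignType, a * b = 1 → b * x = a → x = 1 := by decide
private lemma sgn7 : ∀ a b : SignType, a * b = 1 → (a = 1 ∧ b = 1) ∨ (-a = 1 ∧ -b = 1) := by
  decide

/-- A homomorphism of hyperrings from a commutative ring `R` to the sign hyperfield `S` is
determined by its kernel `p`, a prime ideal of `R`, together with a (unique) total order on
the field of fractions of `R/p`. -/
theorem stmt9 (R : Type u) [CommRing R] (f : R → SignType) (hf : IsHomToS R f) :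
    ∃ p : Ideal R, p.IsPrime ∧ (∀ x : R, f x = 0 ↔ x ∈ p) ∧
      ∃! P : Set (FractionRing (R ⧸ p)), IsOrderCone P ∧
        ∀ x : R, (f x = 1 ↔
          algebraMap (R ⧸ p) (FractionRing (R ⧸ p)) (Ideal.Quotient.mk p x) ∈ P) := by
  obtain ⟨h0, h1, hmul, hadd⟩ := hf
  -- f (-1) = -1
  have hneg1 : f (-1) = -1 := by
    have hsq : f (-1) * f (-1) = 1 := by
      rw [← hmul]; simpa using h1
    have hz := hadd 1 (-1)
    rw [add_neg_cancel, h0, h1] at hz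
    rcases h : f (-1) with _ | _ | _ <;> rw [h] at hsq hz <;> simp_all [Shadd]
  have hfneg : ∀ a : R, f (-a) = -f a := by
    intro a
    rw [show -a = -1 * a by ring, hmul, hneg1, neg_one_mul]
  -- the ideal p
  set p : Ideal R :=
    { carrier := {x | f x = 0}
      add_mem' := by
        intro a b ha hb
        simp only [Set.mem_setOf_eq] at ha hb ⊢
        have := hadd a b
        rw [ha, hb] at this
        simpa [Shadd] using this
      zero_mem' := h0
      smul_mem' := by
        intro c x hx
        simp only [Set.mem_setOf_eq] at hx ⊢
        rw [smul_eq_mul, hmul, hx, mul_zero] } with hpdef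
  have hmem : ∀ x : R, f x = 0 ↔ x ∈ p := fun x => Iff.rfl
  have hpr : p.IsPrime := by
    constructor
    · intro h
      have : (1 : R) ∈ p := h ▸ Submodule.mem_top
      rw [← hmem, h1] at this
      exact one_ne_zero this
    · intro a b hab
      rw [← hmem] at hab
      rw [← hmem a, ← hmem b]
      have : f a * f b = 0 := by rw [← hmul]; exact hab
      exact mul_eq_zero.mp this
  haveI := hpr
  refine ⟨p, hpr, hmem, ?_⟩
  -- notation
  set mk : R → R ⧸ p := fun x => Ideal.Quotient.mk p x with hmkdef
  set K := FractionRing (R ⧸ p) with hKdef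
  set φ : R ⧸ p → K := fun x => algebraMap (R ⧸ p) K x with hφdef
  have hφring : ∀ x y : R ⧸ p, φ (x * y) = φ x * φ y := fun x y => map_mul _ x y
  have hmkring : ∀ x y : R, mk (x * y) = mk x * mk y := fun x y => map_mul _ x y
  have hφadd : ∀ x y : R ⧸ p, φ (x + y) = φ x + φ y := fun x y => map_add _ x y
  have hmkadd : ∀ x y : R, mk (x + y) = mk x + mk y := fun x y => map_add _ x y
  have hφneg : ∀ x : R ⧸ p, φ (-x) = -φ x := fun x => map_neg _ x
  have hmkneg : ∀ x : R, mk (-x) = -mk x := fun x => map_neg _ x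
  have hφzero : φ 0 = 0 := map_zero _
  have hmkone : mk 1 = 1 := map_one _
  have hφone : φ 1 = 1 := map_one _
  have hinj : Function.Injective φ := IsFractionRing.injective (R ⧸ p) K
  -- congruence of f along mk
  have hcong : ∀ a b : R, mk a = mk b → f a = f b := by
    intro a b hab
    have hd : f (a - b) = 0 := (hmem _).2 (Ideal.Quotient.eq.mp hab)
    have h2 := hadd (a - b) b
    rw [hd, show a - b + b = a by ring, Shadd_zero] at h2
    exact h2
  have hmk0 : ∀ a : R, mk a = 0 ↔ f a = 0 := by
    intro a
    rw [hmem]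
    exact Ideal.Quotient.eq_zero_iff_mem
  -- f a = f b ≠ 0 implies f (a+b) = f a
  have hsame : ∀ a b : R, f a = f b → f a ≠ 0 → f (a + b) = f a := by
    intro a b he hne
    have h2 := hadd a b
    rw [← he] at h2
    rcases h : f a with _ | _ | _
    · exact absurd h hne
    · rw [h, Shadd_nn] at h2; exact h2
    · rw [h, Shadd_pp] at h2; exact h2
  -- key consistency of signs of representations
  have hkey : ∀ (z : K) (a b c d : R), φ (mk b) * z = φ (mk a) → φ (mk d) * z = φ (mk c) →
      f b ≠ 0 → f d ≠ 0 → f a * f b = f c * f d := by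
    intro z a b c d hab hcd hb hd
    have h2 : φ (mk (d * a)) = φ (mk (b * c)) := by
      rw [hmkring, hmkring, hφring, hφring, ← hab, ← hcd]
      ring
    have h3 : f (d * a) = f (b * c) := hcong _ _ (hinj h2)
    rw [hmul, hmul] at h3
    exact sgn2 _ _ _ _ hb hd h3
  -- the cone
  set P : Set K := {z : K | ∃ a b : R, φ (mk b) * z = φ (mk a) ∧ f a * f b = 1} with hPdef
  have hPmem : ∀ z : K, z ∈ P ↔ ∃ a b : R, φ (mk b) * z = φ (mk a) ∧ f a * f b = 1 :=
    fun z => Iff.rfl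
  have hP0 : (0 : K) ∉ P := by
    rintro ⟨a, b, hab, hs⟩
    rw [mul_zero] at hab
    have : mk a = 0 := hinj (by rw [← hab, hφzero])
    rw [(hmk0 a).1 this, zero_mul] at hs
    exact absurd hs (by decide)
  have hPadd : ∀ a ∈ P, ∀ b ∈ P, a + b ∈ P := by
    rintro z ⟨a, b, hab, hs⟩ w ⟨c, d, hcd, ht⟩
    obtain ⟨heq, hne, hfin⟩ := sgn3 _ _ _ _ hs ht
    refine ⟨a * d + c * b, b * d, ?_, ?_⟩
    · calc φ (mk (b * d)) * (z + w)
          = φ (mk d) * (φ (mk b) * z) + φ (mk b) * (φ (mk d) * w) := by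
            rw [hmkring, hφring]; ring
        _ = φ (mk (a * d + c * b)) := by
            rw [hab, hcd, hmkadd, hmkring, hmkring, hφadd, hφring, hφring]; ring
    · rw [hmul]
      have h4 : f (a * d + c * b) = f (a * d) := by
        apply hsame
        · rw [hmul, hmul]; exact heq
        · rw [hmul]; exact hne
      rw [h4, hmul]
      exact hfin
  have hPmul : ∀ a ∈ P, ∀ b ∈ P, a * b ∈ P := by
    rintro z ⟨a, b, hab, hs⟩ w ⟨c, d, hcd, ht⟩
    refine ⟨a * c, b * d, ?_, ?_⟩
    · calc φ (mk (b * d)) * (z * w) = (φ (mk b) * z) * (φ (mk d) * w) := by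
            rw [hmkring, hφring]; ring
        _ = φ (mk (a * c)) := by rw [hab, hcd, hmkring, hφring]
    · rw [hmul, hmul]
      exact sgn4 _ _ _ _ hs ht
  have hPtot : ∀ z : K, z ≠ 0 → z ∈ P ∨ -z ∈ P := by
    intro z hz
    obtain ⟨⟨x, y⟩, hxy⟩ := IsLocalization.surj (nonZeroDivisors (R ⧸ p)) z
    obtain ⟨a, ha⟩ := Ideal.Quotient.mk_surjective x
    obtain ⟨b, hb⟩ := Ideal.Quotient.mk_surjective (y : R ⧸ p)
    have hyne : (y : R ⧸ p) ≠ 0 := nonZeroDivisors.coe_ne_zero y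
    have hfb : f b ≠ 0 := fun h => hyne (hb ▸ (hmk0 b).2 h)
    have heq : φ (mk b) * z = φ (mk a) := by
      rw [show mk a = x from ha, show mk b = (y : R ⧸ p) from hb, mul_comm]
      exact hxy
    have hfa : f a ≠ 0 := by
      intro h
      apply hz
      have hma : mk a = 0 := (hmk0 a).2 h
      have : φ (mk b) * z = 0 := by rw [heq, hma]; exact map_zero _
      rcases mul_eq_zero.mp this with h2 | h2
      · exact absurd (hinj (h2.trans (map_zero _).symm)) (fun hh => hfb ((hmk0 b).1 hh))
      · exact h2
    rcases sgn5 _ _ hfa hfb with h | h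
    · exact Or.inl ⟨a, b, heq, h⟩
    · refine Or.inr ⟨-a, b, ?_, ?_⟩
      · rw [hmkneg, hφneg, ← heq]; ring
      · rw [hfneg]; exact h
  have hPasym : ∀ z : K, ¬(z ∈ P ∧ -z ∈ P) := by
    rintro z ⟨⟨a, b, hab, hs⟩, ⟨c, d, hcd, ht⟩⟩
    have hcd' : φ (mk d) * z = φ (mk (-c)) := by
      rw [hmkneg, hφneg, ← hcd]; ring
    have hb := (sgn1 _ _ hs).2
    have hd := (sgn1 _ _ ht).2
    have h5 := hkey z a b (-c) d hab hcd' hb hd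
    rw [hs, hfneg, neg_mul, ht] at h5
    exact absurd h5 (by decide)
  have hPcond : ∀ x : R, f x = 1 ↔ φ (mk x) ∈ P := by
    intro x
    constructor
    · intro hx
      refine ⟨x, 1, ?_, by rw [hx, h1]; rfl⟩
      rw [hmkone, hφone, one_mul]
    · rintro ⟨a, b, hab, hs⟩
      have h2 : φ (mk (b * x)) = φ (mk a) := by rw [hmkring, hφring]; exact hab
      have h3 : f (b * x) = f a := hcong _ _ (hinj h2)
      rw [hmul] at h3
      exact sgn6 (f a) (f b) (f x) hs h3
  refine ⟨P, ⟨⟨hPadd, hPmul, hP0, hPtot, hPasym⟩, hPcond⟩, ?_⟩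
  -- uniqueness
  rintro Q ⟨⟨hQadd, hQmul, hQ0, hQtot, hQasym⟩, hQcond⟩
  have hPQ : ∀ z ∈ P, z ∈ Q := by
    rintro z ⟨a, b, hab, hs⟩
    -- normalize to positive representatives
    obtain ⟨a', b', hab', ha', hb'⟩ :
        ∃ a' b' : R, φ (mk b') * z = φ (mk a') ∧ f a' = 1 ∧ f b' = 1 := by
      rcases sgn7 _ _ hs with ⟨h2, h3⟩ | ⟨h2, h3⟩
      · exact ⟨a, b, hab, h2, h3⟩
      · refine ⟨-a, -b, ?_, by rw [hfneg]; exact h2, by rw [hfneg]; exact h3⟩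
        rw [hmkneg, hmkneg, hφneg, hφneg, ← hab]
        ring
    have hu : φ (mk a') ∈ Q := (hQcond a').1 ha'
    have hv : φ (mk b') ∈ Q := (hQcond b').1 hb'
    have hzne : z ≠ 0 := by
      intro h
      rw [h, mul_zero] at hab'
      exact hQ0 (hab' ▸ hu)
    rcases hQtot z hzne with h | h
    · exact h
    · exfalso
      have : φ (mk b') * -z ∈ Q := hQmul _ hv _ h
      rw [show φ (mk b') * -z = -(φ (mk b') * z) by ring, hab'] at this
      exact hQasym _ ⟨hu, this⟩
  apply Set.Subset.antisymm
  · intro z hz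
    have hzne : z ≠ 0 := fun h => hQ0 (h ▸ hz)
    rcases hPtot z hzne with h | h
    · exact h
    · exact absurd ⟨hz, hPQ _ h⟩ (hQasym z)
  · exact hPQ
end

section
/- Let E be a K-vector space with set of nonzero points P = E∖{0}, and define L(x,y) = (x+y) ∪ {x,y} for distinct x,y ∈ P. Then through any two distinct points of P passes a unique line: if a ≠ b both lie in L(x,y), then L(a,b) = L(x,y). -/
universe u

/-- The line through two points: `L(x, y) = (x + y) ∪ {x, y}`. -/
def lineOf {α : Type u} (H : CHG α) (x y : α) : Set α :=
  H.hadd x y ∪ {x, y}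

section Aux

variable {α : Type u} (H : CHG α)

theorem CHG.neg_eq (hV : ∀ x : α, x ≠ H.zero → H.hadd x x = {H.zero, x}) (a : α) : H.neg a = a := by
  by_cases h : a = H.zero
  · subst h
    refine (H.neg_unique _ _ ?_).symm
    rw [H.zero_hadd]; rfl
  · refine (H.neg_unique a a ?_).symm
    rw [hV a h]; exact Or.inl rfl

theorem CHG.rot (hV : ∀ x : α, x ≠ H.zero → H.hadd x x = {H.zero, x}) {a b c : α} (h : a ∈ H.hadd b c) : c ∈ H.hadd a b := by
  have := H.reversible a b c h
  rwa [H.neg_eq hV] at this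

theorem CHG.zero_not_mem (hV : ∀ x : α, x ≠ H.zero → H.hadd x x = {H.zero, x}) {p q : α} (hpq : p ≠ q) : H.zero ∉ H.hadd p q := by
  intro h
  exact hpq ((H.neg_unique p q h).trans (H.neg_eq hV p)).symm

theorem CHG.mem_ne_zero (hV : ∀ x : α, x ≠ H.zero → H.hadd x x = {H.zero, x}) {p q r : α} (hpq : p ≠ q) (hr : r ∈ H.hadd p q) :
    r ≠ H.zero := by
  rintro rfl; exact H.zero_not_mem hV hpq hr

theorem CHG.mem_ne_left (hV : ∀ x : α, x ≠ H.zero → H.hadd x x = {H.zero, x}) {p q r : α} (hp : p ≠ H.zero) (hq : q ≠ H.zero)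
    (hpq : p ≠ q) (hr : r ∈ H.hadd p q) : r ≠ p := by
  rintro rfl
  have hq' := H.rot hV hr
  rw [hV _ hp] at hq'
  rcases hq' with h | h
  · exact hq h
  · exact hpq h.symm

theorem CHG.mem_ne_right (hV : ∀ x : α, x ≠ H.zero → H.hadd x x = {H.zero, x}) {p q r : α} (hp : p ≠ H.zero) (hq : q ≠ H.zero)
    (hpq : p ≠ q) (hr : r ∈ H.hadd p q) : r ≠ q := by
  rw [H.hadd_comm] at hr
  exact H.mem_ne_left hV hq hp hpq.symm hr

/-- Key lemma: if `r ∈ p + q` then `r + p ⊆ {q} ∪ (p + q)`. -/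
theorem CHG.lemA (hV : ∀ x : α, x ≠ H.zero → H.hadd x x = {H.zero, x}) {p q r : α} (hp : p ≠ H.zero) (hr : r ∈ H.hadd p q) :
    H.hadd r p ⊆ insert q (H.hadd p q) := by
  intro c hc
  have hr' : r ∈ H.hadd q p := by rwa [H.hadd_comm]
  have hc' : c ∈ ⋃ t ∈ H.hadd q p, H.hadd t p := Set.mem_biUnion hr' hc
  rw [H.hadd_assoc q p p, hV p hp] at hc'
  rcases Set.mem_iUnion₂.1 hc' with ⟨u, hu, hcu⟩
  rcases hu with rfl | hu
  · rw [H.hadd_comm, H.zero_hadd] at hcu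
    exact Or.inl hcu
  · rw [Set.mem_singleton_iff] at hu
    subst hu
    rw [H.hadd_comm] at hcu
    exact Or.inr hcu

theorem lineOf_comm (x y : α) : lineOf H x y = lineOf H y x := by
  unfold lineOf
  rw [H.hadd_comm, Set.pair_comm]

/-- If `r ∈ p + q` with `p ≠ q` nonzero, then `L(r,p) = L(p,q)`. -/
theorem CHG.lemB (hV : ∀ x : α, x ≠ H.zero → H.hadd x x = {H.zero, x}) {p q r : α} (hp : p ≠ H.zero) (hq : q ≠ H.zero)
    (hpq : p ≠ q) (hr : r ∈ H.hadd p q) :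
    lineOf H r p = lineOf H p q := by
  apply Set.Subset.antisymm
  · rintro c (hc | hc)
    · rcases H.lemA hV hp hr hc with rfl | hc'
      · exact Or.inr (Or.inr rfl)
      · exact Or.inl hc'
    · rcases hc with rfl | hc
      · exact Or.inl hr
      · rw [Set.mem_singleton_iff] at hc; subst hc
        exact Or.inr (Or.inl rfl)
  · have hqrp : q ∈ H.hadd r p := H.rot hV hr
    have hqpr : q ∈ H.hadd p r := by rwa [H.hadd_comm]
    have hsub : H.hadd q p ⊆ insert r (H.hadd p r) := H.lemA hV hp hqpr
    rintro c (hc | hc)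
    · have hc' : c ∈ H.hadd q p := by rwa [H.hadd_comm]
      rcases hsub hc' with rfl | hc''
      · exact Or.inr (Or.inl rfl)
      · rw [H.hadd_comm] at hc''
        exact Or.inl hc''
    · rcases hc with rfl | hc
      · exact Or.inr (Or.inr rfl)
      · rw [Set.mem_singleton_iff] at hc; subst hc
        exact Or.inl hqrp

end Aux

/-- In the geometry attached to a `K`-vector space, two distinct points lie on a unique line:
if `a ≠ b` both lie on `L(x, y)` then `L(a, b) = L(x, y)`. -/
theorem stmt11 {α : Type u} (H : CHG α)
    (hV : ∀ x : α, x ≠ H.zero → H.hadd x x = {H.zero, x})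
    (x y a b : α) (hx : x ≠ H.zero) (hy : y ≠ H.zero) (hxy : x ≠ y)
    (hab : a ≠ b) (ha : a ∈ lineOf H x y) (hb : b ∈ lineOf H x y) :
    lineOf H a b = lineOf H x y := by
  rcases ha with ha | ha
  · -- a ∈ x + y
    have hax : a ≠ x := H.mem_ne_left hV hx hy hxy ha
    have hay : a ≠ y := H.mem_ne_right hV hx hy hxy ha
    have ha0 : a ≠ H.zero := H.mem_ne_zero hV hxy ha
    have hLax : lineOf H a x = lineOf H x y := H.lemB hV hx hy hxy ha
    rcases hb with hb | hb
    · -- b ∈ x + y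
      have hbx : b ≠ x := H.mem_ne_left hV hx hy hxy hb
      have hb' : b ∈ lineOf H a x := by rw [hLax]; exact Or.inl hb
      have hbax : b ∈ H.hadd a x := by
        rcases hb' with h | h
        · exact h
        · rcases h with rfl | h
          · exact absurd rfl hab
          · rw [Set.mem_singleton_iff] at h; exact absurd h hbx
      have : lineOf H b a = lineOf H a x := H.lemB hV ha0 hx hax hbax
      rw [lineOf_comm, this, hLax]
    · rcases hb with rfl | hb
      · -- b = x
        exact hLax
      · -- b = y
        rw [Set.mem_singleton_iff] at hb; subst hb
        have ha' : a ∈ H.hadd b x := by rwa [H.hadd_comm] at ha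
        have := H.lemB hV hy hx hxy.symm ha'
        rw [this, lineOf_comm]
  · rcases ha with rfl | ha
    · -- a = x
      rcases hb with hb | hb
      · rw [lineOf_comm]
        exact H.lemB hV hx hy hxy hb
      · rcases hb with rfl | hb
        · exact absurd rfl hab
        · rw [Set.mem_singleton_iff] at hb; subst hb; rfl
    · -- a = y
      rw [Set.mem_singleton_iff] at ha; subst ha
      rcases hb with hb | hb
      · have hb' : b ∈ H.hadd a x := by rwa [H.hadd_comm] at hb
        rw [lineOf_comm]
        rw [H.lemB hV hy hx hxy.symm hb', lineOf_comm]
      · rcases hb with rfl | hb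
        · exact lineOf_comm H a b
        · rw [Set.mem_singleton_iff] at hb; subst hb; exact absurd rfl hab
end

section
/- Let E be a K-vector space with P = E∖{0} and lines L(x,y) = (x+y) ∪ {x,y} for x ≠ y in P. Then every line contains at least 4 points. -/
universe u

/-- In the geometry attached to a `K`-vector space, every line contains at least 4 points. -/
theorem stmt12 {α : Type u} (H : CHG α)
    (hV : ∀ x : α, x ≠ H.zero → H.hadd x x = {H.zero, x})
    (x y : α) (hx : x ≠ H.zero) (hy : y ≠ H.zero) (hxy : x ≠ y) :
    ∃ a b c d : α, a ∈ lineOf H x y ∧ b ∈ lineOf H x y ∧ c ∈ lineOf H x y ∧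
      d ∈ lineOf H x y ∧ a ≠ b ∧ a ≠ c ∧ a ≠ d ∧ b ≠ c ∧ b ≠ d ∧ c ≠ d := by
  have hneg : ∀ a : α, H.neg a = a := by
    intro a
    by_cases h : a = H.zero
    · subst h
      exact (H.neg_unique _ _ (by rw [H.zero_hadd]; rfl)).symm
    · exact (H.neg_unique a a (by rw [hV a h]; left; rfl)).symm
  have hnotmem : ∀ a b : α, a ≠ H.zero → b ≠ H.zero → a ≠ b → a ∉ H.hadd a b := by
    intro a b ha hb hab hmem
    have h2 := H.reversible a a b hmem
    rw [hneg, hV a ha] at h2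
    rcases h2 with h | h
    · exact hb h
    · exact hab h.symm
  have hnx : x ∉ H.hadd x y := hnotmem x y hx hy hxy
  have hny : y ∉ H.hadd x y := by
    rw [H.hadd_comm]; exact hnotmem y x hy hx (Ne.symm hxy)
  obtain ⟨u, hu⟩ := H.hadd_nonempty x y
  have hu0 : u ≠ H.zero := by
    intro h; subst h
    have h2 := H.neg_unique x y hu
    rw [hneg] at h2
    exact hxy h2.symm
  have hv : ∃ v ∈ H.hadd x y, v ≠ u := by
    by_contra h
    push_neg at h
    have hset : H.hadd x y = {u} := Set.eq_singleton_iff_unique_mem.mpr ⟨hu, h⟩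
    have hassoc := H.hadd_assoc x y y
    have hL : (⋃ w ∈ H.hadd x y, H.hadd w y) = H.hadd u y := by
      rw [hset]; simp
    have hR : (⋃ v ∈ H.hadd y y, H.hadd x v) = {x} ∪ H.hadd x y := by
      rw [hV y hy]
      rw [show ({H.zero, y} : Set α) = insert H.zero {y} from rfl]
      rw [Set.biUnion_insert, Set.biUnion_singleton, H.hadd_comm x H.zero, H.zero_hadd]
    have humem : u ∈ H.hadd u y := by
      have h2 : u ∈ ({x} ∪ H.hadd x y : Set α) := Or.inr hu
      rw [← hR, ← hassoc, hL] at h2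
      exact h2
    have huy : u ≠ y := fun h2 => hny (h2 ▸ hu)
    exact hnotmem u y hu0 hy huy humem
  obtain ⟨v, hvmem, hvu⟩ := hv
  refine ⟨x, y, u, v, Or.inr (Or.inl rfl), Or.inr (Or.inr rfl), Or.inl hu, Or.inl hvmem,
    hxy, ?_, ?_, ?_, ?_, Ne.symm hvu⟩
  · exact fun h => hnx (h ▸ hu)
  · exact fun h => hnx (h ▸ hvmem)
  · exact fun h => hny (h ▸ hu)
  · exact fun h => hny (h ▸ hvmem)
end

section
/- Let E be a K-vector space with P = E∖{0} and lines L(x,y) = (x+y) ∪ {x,y}. Then the Pasch axiom holds: for distinct x,y ∈ P and z ∉ L(x,y), and for any t ∈ L(x,y)∖{x} and u ∈ L(x,z)∖{x}, the lines L(y,z) and L(t,u) have nonempty intersection. -/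
universe u

section Aux

variable {α : Type u} (H : CHG α)

/-- Sum of subsets. -/
def sadd (X Y : Set α) : Set α := ⋃ a ∈ X, ⋃ b ∈ Y, H.hadd a b

lemma mem_sadd {X Y : Set α} {c : α} :
    c ∈ sadd H X Y ↔ ∃ a ∈ X, ∃ b ∈ Y, c ∈ H.hadd a b := by
  simp [sadd]

lemma sadd_comm (X Y : Set α) : sadd H X Y = sadd H Y X := by
  ext c
  simp only [mem_sadd]
  constructor <;> rintro ⟨a, ha, b, hb, hc⟩ <;>
    exact ⟨b, hb, a, ha, by rw [H.hadd_comm]; exact hc⟩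

lemma sadd_assoc (X Y Z : Set α) :
    sadd H (sadd H X Y) Z = sadd H X (sadd H Y Z) := by
  ext c
  simp only [mem_sadd]
  constructor
  · rintro ⟨m, ⟨a, ha, b, hb, hm⟩, w, hw, hc⟩
    have hc' : c ∈ ⋃ n ∈ H.hadd b w, H.hadd a n := by
      rw [← H.hadd_assoc a b w]
      exact Set.mem_biUnion hm hc
    obtain ⟨n, hn, hcn⟩ : ∃ n ∈ H.hadd b w, c ∈ H.hadd a n := by
      simpa using hc'
    exact ⟨a, ha, n, ⟨b, hb, w, hw, hn⟩, hcn⟩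
  · rintro ⟨a, ha, n, ⟨b, hb, w, hw, hn⟩, hc⟩
    have hc' : c ∈ ⋃ m ∈ H.hadd a b, H.hadd m w := by
      rw [H.hadd_assoc a b w]
      exact Set.mem_biUnion hn hc
    obtain ⟨m, hm, hcm⟩ : ∃ m ∈ H.hadd a b, c ∈ H.hadd m w := by
      simpa using hc'
    exact ⟨m, ⟨a, ha, b, hb, hm⟩, w, hw, hcm⟩

lemma sadd_singleton (a b : α) : sadd H {a} {b} = H.hadd a b := by
  ext c; simp [mem_sadd]

lemma sadd_sadd_comm (A B C D : Set α) :
    sadd H (sadd H A B) (sadd H C D) = sadd H (sadd H A C) (sadd H B D) := by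
  rw [sadd_assoc, ← sadd_assoc H B C D, sadd_comm H B C,
    sadd_assoc H C B D, ← sadd_assoc]

end Aux

/-- Pasch axiom in the geometry attached to a `K`-vector space: a line meeting two sides of a
triangle not at their intersection also meets the third side. -/
theorem stmt13 {α : Type u} (H : CHG α)
    (hV : ∀ x : α, x ≠ H.zero → H.hadd x x = {H.zero, x})
    (x y z t u : α) (hx : x ≠ H.zero) (hy : y ≠ H.zero) (hz : z ≠ H.zero)
    (hxy : x ≠ y) (hzL : z ∉ lineOf H x y)
    (ht : t ∈ lineOf H x y) (htx : t ≠ x)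
    (hu : u ∈ lineOf H x z) (hux : u ≠ x) :
    (lineOf H y z ∩ lineOf H t u).Nonempty := by
  -- negation is the identity
  have hzero_mem : ∀ a : α, H.zero ∈ H.hadd a a := by
    intro a
    by_cases ha : a = H.zero
    · subst ha; rw [H.zero_hadd]; rfl
    · rw [hV a ha]; exact Or.inl rfl
  have hneg : ∀ a : α, H.neg a = a := fun a => (H.neg_unique a a (hzero_mem a)).symm
  have hrev : ∀ a b c : α, a ∈ H.hadd b c → c ∈ H.hadd a b := by
    intro a b c h
    have := H.reversible a b c h
    rwa [hneg] at this
  -- dispatch the degenerate cases t = y and u = z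
  rcases ht with htm | htm
  swap
  · rcases htm with hty | hty
    · exact absurd hty htx
    · -- t = y, so y is a common point
      refine ⟨y, Or.inr (Or.inl rfl), Or.inr (Or.inl ?_)⟩
      exact hty.symm
  rcases hu with hum | hum
  swap
  · rcases hum with huz | huz
    · exact absurd huz hux
    · -- u = z, so z is a common point
      refine ⟨z, Or.inr (Or.inr rfl), Or.inr (Or.inr ?_)⟩
      exact huz.symm
  -- main case : t ∈ x + y, u ∈ x + z
  have hxty : x ∈ H.hadd t y := hrev t y x (by rwa [H.hadd_comm] at htm)
  have hxuz : x ∈ H.hadd u z := hrev u z x (by rwa [H.hadd_comm] at hum)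
  have h0 : H.zero ∈ sadd H (H.hadd t y) (H.hadd u z) :=
    (mem_sadd H).mpr ⟨x, hxty, x, hxuz, hzero_mem x⟩
  have hrearr : sadd H (H.hadd t y) (H.hadd u z) = sadd H (H.hadd t u) (H.hadd y z) := by
    rw [← sadd_singleton H t y, ← sadd_singleton H u z, ← sadd_singleton H t u,
      ← sadd_singleton H y z, sadd_sadd_comm]
  rw [hrearr] at h0
  obtain ⟨s, hs, q, hq, h0sq⟩ := (mem_sadd H).mp h0
  have hqs : q = s := by
    have := H.neg_unique s q h0sq
    rwa [hneg] at this
  exact ⟨s, Or.inl (hqs ▸ hq), Or.inl hs⟩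
end

section
/- Let (P, L) be a projective geometry satisfying axioms P1 (two distinct points lie on a unique line), P2 (Pasch axiom), and P3' (every line has at least 4 points). Define on E = P ∪ {0} the hyperaddition: x+0=0+x=x, x+x={0,x}, and x+y = L(x,y)∖{x,y} for distinct nonzero x,y. Then (E,+) is a canonical hypergroup satisfying x+x={0,x}, i.e., a K-vector space. -/
universe u

open Classical in
/-- The hyperaddition on `P ∪ {0}` (modelled as `Option P`, with `0 = none`) attached to a
projective geometry with lines `line x y`: `x + 0 = x`, `x + x = {0, x}`, and
`x + y = L(x, y) \ {x, y}` for distinct nonzero `x, y`. -/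
noncomputable def geomAdd {P : Type u} (line : P → P → Set P) :
    Option P → Option P → Set (Option P) :=
  fun a b => match a, b with
  | none, b => {b}
  | some x, none => {some x}
  | some x, some y =>
      if x = y then {none, some x} else some '' (line x y \ {x, y})

/-- A projective geometry `(P, L)` satisfying P1 (unique line through two distinct points),
P2 (Pasch) and P3' (every line has at least 4 points) gives rise to a canonical hypergroup
structure on `E = P ∪ {0}`, i.e. a `K`-vector space. -/
theorem stmt14 (P : Type u) (lines : Set (Set P)) (line : P → P → Set P)
    (hmem : ∀ x y : P, x ≠ y → x ∈ line x y ∧ y ∈ line x y ∧ line x y ∈ lines)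
    (huniq : ∀ x y : P, x ≠ y → ∀ l ∈ lines, x ∈ l → y ∈ l → l = line x y)
    (hP2 : ∀ x y z t u : P, x ≠ y → z ∉ line x y → t ∈ line x y → t ≠ x →
      u ∈ line x z → u ≠ x → (line y z ∩ line t u).Nonempty)
    (hP3 : ∀ l ∈ lines, ∃ a b c d : P, a ∈ l ∧ b ∈ l ∧ c ∈ l ∧ d ∈ l ∧
      a ≠ b ∧ a ≠ c ∧ a ≠ d ∧ b ≠ c ∧ b ≠ d ∧ c ≠ d) :
    ∃ H : CHG (Option P), H.zero = none ∧ H.hadd = geomAdd line := by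
  classical
  have memx : ∀ x y : P, x ≠ y → x ∈ line x y := fun x y h => (hmem x y h).1
  have memy : ∀ x y : P, x ≠ y → y ∈ line x y := fun x y h => (hmem x y h).2.1
  have hlu : ∀ x y u v : P, x ≠ y → u ∈ line x y → v ∈ line x y → u ≠ v →
      line x y = line u v := fun x y u v hxy hu hv huv =>
    huniq u v huv (line x y) (hmem x y hxy).2.2 hu hv
  have hsymm : ∀ x y : P, x ≠ y → line x y = line y x := fun x y h =>
    hlu x y y x h (memy x y h) (memx x y h) (Ne.symm h)
  have havoid : ∀ x y : P, x ≠ y → ∀ s1 s2 s3 : P,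
      ∃ u, u ∈ line x y ∧ u ≠ s1 ∧ u ≠ s2 ∧ u ≠ s3 := by
    intro x y h s1 s2 s3
    obtain ⟨a, b, c, d, ha, hb, hc, hd, hab, hac, had, hbc, hbd, hcd⟩ :=
      hP3 (line x y) (hmem x y h).2.2
    by_contra hcon
    push_neg at hcon
    have key : ∀ u, u ∈ line x y → u = s1 ∨ u = s2 ∨ u = s3 := by
      intro u hu
      by_cases h1 : u = s1
      · exact Or.inl h1
      by_cases h2 : u = s2
      · exact Or.inr (Or.inl h2)
      exact Or.inr (Or.inr (hcon u hu h1 h2))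
    have hsub : ({a, b, c, d} : Finset P) ⊆ {s1, s2, s3} := by
      intro t ht
      simp only [Finset.mem_insert, Finset.mem_singleton] at ht ⊢
      rcases ht with rfl | rfl | rfl | rfl
      · exact key t ha
      · exact key t hb
      · exact key t hc
      · exact key t hd
    have h4 : ({a, b, c, d} : Finset P).card = 4 := by
      rw [Finset.card_insert_of_notMem (by simp [hab, hac, had]),
        Finset.card_insert_of_notMem (by simp [hbc, hbd]),
        Finset.card_insert_of_notMem (by simp [hcd]), Finset.card_singleton]
    have h3 : ({s1, s2, s3} : Finset P).card ≤ 3 := by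
      apply le_trans (Finset.card_insert_le _ _)
      have h5 := Finset.card_insert_le s2 ({s3} : Finset P)
      simp only [Finset.card_singleton] at h5
      omega
    have h6 := Finset.card_le_card hsub
    omega
  -- basic facts about geomAdd
  have gzl : ∀ b : Option P, geomAdd line none b = {b} := fun _ => rfl
  have gzr : ∀ b : Option P, geomAdd line b none = {b} := by
    intro b; cases b <;> rfl
  have gss : ∀ x : P, geomAdd line (some x) (some x) = {none, some x} := by
    intro x; simp [geomAdd]
  have gdd : ∀ x y : P, x ≠ y →
      geomAdd line (some x) (some y) = some '' (line x y \ {x, y}) := by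
    intro x y h; simp [geomAdd, h]
  have gmem : ∀ (x y q : P), x ≠ y →
      (some q ∈ geomAdd line (some x) (some y) ↔ q ∈ line x y ∧ q ≠ x ∧ q ≠ y) := by
    intro x y q h
    rw [gdd x y h]
    simp only [Set.mem_image, Set.mem_diff, Set.mem_insert_iff, Set.mem_singleton_iff,
      Option.some.injEq]
    constructor
    · rintro ⟨p, ⟨hp, hne⟩, rfl⟩
      exact ⟨hp, fun h' => hne (Or.inl h'), fun h' => hne (Or.inr h')⟩
    · rintro ⟨h1, h2, h3⟩
      exact ⟨q, ⟨h1, fun h' => h'.elim h2 h3⟩, rfl⟩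
  have gnone : ∀ (x y : P), x ≠ y → none ∉ geomAdd line (some x) (some y) := by
    intro x y h hc
    rw [gdd x y h] at hc
    obtain ⟨p, -, hp⟩ := hc
    simp at hp
  have gcomm : ∀ a b, geomAdd line a b = geomAdd line b a := by
    intro a b
    cases a with
    | none => rw [gzl, gzr]
    | some x =>
      cases b with
      | none => rw [gzl, gzr]
      | some y =>
        by_cases h : x = y
        · subst h; rfl
        · rw [gdd x y h, gdd y x (Ne.symm h), ← hsymm x y h, Set.pair_comm y x]
  have gne : ∀ a b, (geomAdd line a b).Nonempty := by
    intro a b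
    cases a with
    | none => exact ⟨b, rfl⟩
    | some x =>
      cases b with
      | none => exact ⟨some x, rfl⟩
      | some y =>
        by_cases h : x = y
        · subst h; exact ⟨none, by rw [gss]; exact Or.inl rfl⟩
        · obtain ⟨u, hu, hux, huy, -⟩ := havoid x y h x y y
          exact ⟨some u, (gmem x y u h).2 ⟨hu, hux, huy⟩⟩
  -- the key inclusion for associativity
  have key : ∀ a b c w, w ∈ (⋃ v ∈ geomAdd line a b, geomAdd line v c) →
      w ∈ (⋃ u ∈ geomAdd line b c, geomAdd line u a) := by
    intro a b c w hw
    simp only [Set.mem_iUnion] at hw ⊢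
    obtain ⟨v, hv, hwv⟩ := hw
    cases a with
    | none =>
      rw [gzl, Set.mem_singleton_iff] at hv
      subst hv
      exact ⟨w, hwv, by rw [gzr]; rfl⟩
    | some x =>
      cases b with
      | none =>
        rw [gzr, Set.mem_singleton_iff] at hv
        subst hv
        exact ⟨c, by rw [gzl]; rfl, by rw [gcomm]; exact hwv⟩
      | some y =>
        cases c with
        | none =>
          rw [gzr, Set.mem_singleton_iff] at hwv
          subst hwv
          exact ⟨some y, by rw [gzr]; rfl, by rw [gcomm]; exact hv⟩
        | some z =>
          by_cases hxy : x = y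
          · subst hxy
            rw [gss] at hv
            by_cases hxz : x = z
            · subst hxz
              exact ⟨v, by rw [gss]; exact hv, hwv⟩
            · simp only [Set.mem_insert_iff, Set.mem_singleton_iff] at hv
              rcases hv with rfl | rfl
              · -- v = none, so w = some z
                rw [gzl, Set.mem_singleton_iff] at hwv
                subst hwv
                obtain ⟨p, hp, hpx, hpz, -⟩ := havoid x z hxz x z z
                refine ⟨some p, (gmem x z p hxz).2 ⟨hp, hpx, hpz⟩,
                  (gmem p x z hpx).2 ⟨?_, Ne.symm hpz, Ne.symm hxz⟩⟩
                have h1 : line x z = line p x := hlu x z p x hxz hp (memx x z hxz) hpx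
                rw [← h1]; exact memy x z hxz
              · -- v = some x
                cases w with
                | none => exact absurd hwv (gnone x z hxz)
                | some q =>
                  rw [gmem x z q hxz] at hwv
                  obtain ⟨hq, hqx, hqz⟩ := hwv
                  obtain ⟨p, hp, hpx, hpz, hpq⟩ := havoid x z hxz x z q
                  refine ⟨some p, (gmem x z p hxz).2 ⟨hp, hpx, hpz⟩,
                    (gmem p x q hpx).2 ⟨?_, Ne.symm hpq, hqx⟩⟩
                  have h1 : line x z = line p x := hlu x z p x hxz hp (memx x z hxz) hpx
                  rw [← h1]; exact hq
          · -- x ≠ y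
            cases v with
            | none => exact absurd hv (gnone x y hxy)
            | some p =>
              rw [gmem x y p hxy] at hv
              obtain ⟨hp, hpx, hpy⟩ := hv
              by_cases hzy : y = z
              · subst hzy
                -- c = some y
                cases w with
                | none => exact absurd hwv (gnone p y hpy)
                | some q =>
                  rw [gmem p y q hpy] at hwv
                  obtain ⟨hq, hqp, hqy⟩ := hwv
                  have hline : line x y = line p y := hlu x y p y hxy hp (memy x y hxy) hpy
                  by_cases hqx : q = x
                  · subst hqx
                    exact ⟨none, by rw [gss]; exact Or.inl rfl, by rw [gzl]; rfl⟩
                  · refine ⟨some y, by rw [gss]; exact Or.inr rfl,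
                      (gmem y x q (Ne.symm hxy)).2 ⟨?_, hqy, hqx⟩⟩
                    rw [← hsymm x y hxy, hline]; exact hq
              · by_cases hzx : x = z
                · subst hzx
                  -- c = some x : take u := some p
                  refine ⟨some p, (gmem y x p (Ne.symm hxy)).2
                    ⟨by rw [← hsymm x y hxy]; exact hp, hpy, hpx⟩, hwv⟩
                · by_cases hzl : z ∈ line x y
                  · -- collinear case
                    have hyz : y ≠ z := hzy
                    have hlyz : line x y = line y z := hlu x y y z hxy (memy x y hxy) hzl hyz
                    by_cases hpz : p = z
                    · -- v = some z (i.e. z = p after subst)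
                      subst hpz
                      rw [gss] at hwv
                      simp only [Set.mem_insert_iff, Set.mem_singleton_iff] at hwv
                      rcases hwv with rfl | rfl
                      · refine ⟨some x, (gmem y p x hyz).2
                          ⟨by rw [← hlyz]; exact memx x y hxy, hxy, hzx⟩,
                          by rw [gss]; exact Or.inl rfl⟩
                      · obtain ⟨q, hq, hqx, hqy, hqp⟩ := havoid x y hxy x y p
                        refine ⟨some q, (gmem y p q hyz).2 ⟨by rw [← hlyz]; exact hq, hqy, hqp⟩,
                          (gmem q x p hqx).2 ⟨?_, Ne.symm hqp, fun h => hzx h.symm⟩⟩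
                        have h1 : line x y = line q x := hlu x y q x hxy hq (memx x y hxy) hqx
                        rw [← h1]; exact hzl
                    · have hlpz : line x y = line p z := hlu x y p z hxy hp hzl hpz
                      cases w with
                      | none => exact absurd hwv (gnone p z hpz)
                      | some q =>
                        rw [gmem p z q hpz] at hwv
                        obtain ⟨hq, hqp, hqz⟩ := hwv
                        have hqxy : q ∈ line x y := by rw [hlpz]; exact hq
                        by_cases hqx : q = x
                        · refine ⟨some x, (gmem y z x hyz).2
                            ⟨by rw [← hlyz]; exact memx x y hxy, hxy, hzx⟩, ?_⟩
                          rw [hqx, gss]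
                          exact Or.inr rfl
                        · refine ⟨some p, (gmem y z p hyz).2 ⟨by rw [← hlyz]; exact hp, hpy, hpz⟩,
                            (gmem p x q hpx).2 ⟨?_, hqp, hqx⟩⟩
                          have h1 : line x y = line p x := hlu x y p x hxy hp (memx x y hxy) hpx
                          rw [← h1]; exact hqxy
                  · -- Pasch case : z ∉ line x y
                    have hzx' : x ≠ z := hzx
                    have hyz : y ≠ z := hzy
                    have hpz : p ≠ z := fun h => hzl (by rw [← h]; exact hp)
                    cases w with
                    | none => exact absurd hwv (gnone p z hpz)
                    | some q =>
                      rw [gmem p z q hpz] at hwv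
                      obtain ⟨hq, hqp, hqz⟩ := hwv
                      have hlxp : line x y = line p x := hlu x y p x hxy hp (memx x y hxy) hpx
                      have hlyp : line x y = line p y := hlu x y p y hxy hp (memy x y hxy) hpy
                      have hqxy : q ∉ line x y := by
                        intro hc
                        have h1 : line x y = line p q := hlu x y p q hxy hp hc (Ne.symm hqp)
                        have h2 : line p z = line p q :=
                          hlu p z p q hpz (memx p z hpz) hq (Ne.symm hqp)
                        exact hzl (by rw [h1, ← h2]; exact memy p z hpz)
                      have hqx : q ≠ x := fun h => hqxy (by rw [h]; exact memx x y hxy)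
                      have hqy : q ≠ y := fun h => hqxy (by rw [h]; exact memy x y hxy)
                      have hxyz : x ∉ line y z := by
                        intro hc
                        have h1 : line y z = line y x :=
                          hlu y z y x hyz (memx y z hyz) hc (Ne.symm hxy)
                        exact hzl (by rw [hsymm x y hxy, ← h1]; exact memy y z hyz)
                      have hqyz : q ∉ line y z := by
                        intro hc
                        have h1 : line y z = line q z := hlu y z q z hyz hc (memy y z hyz) hqz
                        have h2 : line p z = line q z := hlu p z q z hpz hq (memy p z hpz) hqz
                        have hy' : y ∈ line p z := by rw [h2, ← h1]; exact memx y z hyz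
                        have h3 : line p z = line p y := hlu p z p y hpz (memx p z hpz) hy' hpy
                        exact hzl (by rw [hlyp, ← h3]; exact memy p z hpz)
                      obtain ⟨u0, hu1, hu2⟩ := hP2 p y z x q hpy
                        (by rw [← hlyp]; exact hzl)
                        (by rw [← hlyp]; exact memx x y hxy)
                        (Ne.symm hpx) hq hqp
                      have hu0x : u0 ≠ x := fun h => hxyz (by rw [← h]; exact hu1)
                      have hu0q : u0 ≠ q := fun h => hqyz (by rw [← h]; exact hu1)
                      have hu0y : u0 ≠ y := by
                        intro h
                        have hy' : y ∈ line x q := by rw [← h]; exact hu2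
                        have h1 : line x q = line x y :=
                          hlu x q x y (Ne.symm hqx) (memx x q (Ne.symm hqx)) hy' hxy
                        exact hqxy (by rw [← h1]; exact memy x q (Ne.symm hqx))
                      have hu0z : u0 ≠ z := by
                        intro h
                        have hz' : z ∈ line x q := by rw [← h]; exact hu2
                        have h1 : line x q = line x z :=
                          hlu x q x z (Ne.symm hqx) (memx x q (Ne.symm hqx)) hz' hzx'
                        have hq' : q ∈ line x z := by rw [← h1]; exact memy x q (Ne.symm hqx)
                        have h2 : line p z = line q z := hlu p z q z hpz hq (memy p z hpz) hqz
                        have h3 : line x z = line q z :=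
                          hlu x z q z hzx' hq' (memy x z hzx') hqz
                        have hx' : x ∈ line p z := by rw [h2, ← h3]; exact memx x z hzx'
                        have h4 : line p z = line p x := hlu p z p x hpz (memx p z hpz) hx' hpx
                        exact hzl (by rw [hlxp, ← h4]; exact memy p z hpz)
                      refine ⟨some u0, (gmem y z u0 hyz).2 ⟨hu1, hu0y, hu0z⟩,
                        (gmem u0 x q hu0x).2 ⟨?_, Ne.symm hu0q, hqx⟩⟩
                      have h1 : line x q = line u0 x :=
                        hlu x q u0 x (Ne.symm hqx) hu2 (memx x q (Ne.symm hqx)) hu0x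
                      rw [← h1]; exact memy x q (Ne.symm hqx)
  have gassoc : ∀ a b c, (⋃ v ∈ geomAdd line a b, geomAdd line v c) =
      ⋃ u ∈ geomAdd line b c, geomAdd line a u := by
    intro a b c
    have h1 : (⋃ v ∈ geomAdd line a b, geomAdd line v c) =
        ⋃ u ∈ geomAdd line b c, geomAdd line u a :=
      Set.Subset.antisymm (fun w hw => key a b c w hw)
        (fun w hw => key c a b w (key b c a w hw))
    rw [h1]
    exact Set.iUnion_congr fun u => Set.iUnion_congr fun _ => gcomm u a
  refine ⟨⟨none, geomAdd line, id, gne, gcomm, gassoc, gzl, ?_, ?_, ?_⟩, rfl, rfl⟩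
  · -- zero_mem_hadd_neg
    intro a
    cases a with
    | none => rfl
    | some x => simp only [id_eq]; rw [gss]; exact Or.inl rfl
  · -- neg_unique
    intro a b h
    cases a with
    | none =>
      rw [gzl, Set.mem_singleton_iff] at h
      exact h.symm
    | some x =>
      cases b with
      | none =>
        rw [gzr, Set.mem_singleton_iff] at h
        simp at h
      | some y =>
        by_cases hxy : x = y
        · simp [hxy]
        · exact absurd h (gnone x y hxy)
  · -- reversible
    intro a b c h
    cases b with
    | none =>
      rw [gzl, Set.mem_singleton_iff] at h
      subst h
      simp only [id_eq]
      rw [gzr]; rfl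
    | some x =>
      cases c with
      | none =>
        rw [gzr, Set.mem_singleton_iff] at h
        subst h
        simp only [id_eq]
        rw [gss]; exact Or.inl rfl
      | some y =>
        by_cases hxy : x = y
        · subst hxy
          rw [gss] at h
          simp only [Set.mem_insert_iff, Set.mem_singleton_iff] at h
          simp only [id_eq]
          rcases h with rfl | rfl
          · rw [gzl]; rfl
          · rw [gss]; exact Or.inr rfl
        · cases a with
          | none => exact absurd h (gnone x y hxy)
          | some p =>
            rw [gmem x y p hxy] at h
            obtain ⟨hp, hpx, hpy⟩ := h
            simp only [id_eq]
            refine (gmem p x y hpx).2 ⟨?_, Ne.symm hpy, Ne.symm hxy⟩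
            have h1 : line x y = line p x := hlu x y p x hxy hp (memx x y hxy) hpx
            rw [← h1]; exact memy x y hxy
end

section
/- Let R be a hyperring containing the Krasner hyperfield K as a sub-hyperring. Then the relation on R defined by x ~ y iff (x = y or x ∈ y+1) is an equivalence relation, and it coincides with the relation x ∪ (x+1) = y ∪ (y+1). -/
universe u

/-- In a hyperring `R` containing the Krasner hyperfield `K`, the relation
`x ~ y ↔ (x = y ∨ x ∈ y + 1)` is an equivalence relation, and it coincides with the
relation `x ∪ (x + 1) = y ∪ (y + 1)`. -/
theorem stmt16 {α : Type u} (H : Hyperring α)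
    (hK : H.hadd H.one H.one = {H.zero, H.one}) :
    Equivalence (fun x y : α => x = y ∨ x ∈ H.hadd y H.one) ∧
    ∀ x y : α, (x = y ∨ x ∈ H.hadd y H.one) ↔
      insert x (H.hadd x H.one) = insert y (H.hadd y H.one) := by
  have hneg : ∀ a, H.neg a = a := by
    intro a
    have hd := H.left_distrib a H.one H.one
    rw [hK, H.mul_one] at hd
    have h0 : H.zero ∈ H.hadd a a := by
      rw [← hd]
      exact ⟨H.zero, Set.mem_insert _ _, H.mul_zero a⟩
    exact (H.neg_unique a a h0).symm
  have hsymm : ∀ x y : α, x ∈ H.hadd y H.one → y ∈ H.hadd x H.one := by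
    intro x y hx
    have h1 : H.one ∈ H.hadd x y := by
      have := H.reversible x y H.one hx
      rwa [hneg] at this
    have h2 := H.reversible H.one x y h1
    rw [hneg] at h2
    rwa [H.hadd_comm] at h2
  have hS : ∀ x : α, (⋃ t ∈ H.hadd x H.one, H.hadd t H.one) = insert x (H.hadd x H.one) := by
    intro x
    rw [H.hadd_assoc, hK, Set.biUnion_insert, Set.biUnion_singleton,
      H.hadd_comm x H.zero, H.zero_hadd, Set.singleton_union]
  have hsub : ∀ x y : α, x ∈ H.hadd y H.one →
      insert x (H.hadd x H.one) ⊆ insert y (H.hadd y H.one) := by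
    intro x y hxy
    intro t ht
    rcases ht with rfl | ht
    · exact Set.mem_insert_of_mem _ hxy
    · rw [← hS y]
      exact Set.mem_biUnion hxy ht
  have hiff : ∀ x y : α, (x = y ∨ x ∈ H.hadd y H.one) ↔
      insert x (H.hadd x H.one) = insert y (H.hadd y H.one) := by
    intro x y
    constructor
    · rintro (rfl | h)
      · rfl
      · exact Set.Subset.antisymm (hsub x y h) (hsub y x (hsymm x y h))
    · intro heq
      have : x ∈ insert y (H.hadd y H.one) := heq ▸ Set.mem_insert x _
      rcases this with rfl | h
      · exact Or.inl rfl
      · exact Or.inr h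
  refine ⟨⟨fun x => Or.inl rfl, ?_, ?_⟩, hiff⟩
  · rintro x y (rfl | h)
    · exact Or.inl rfl
    · exact Or.inr (hsymm x y h)
  · intro x y z hxy hyz
    exact (hiff x z).2 (((hiff x y).1 hxy).trans ((hiff y z).1 hyz))
end

section
/- Let R be a hyperring containing the sign hyperfield S as a sub-hyperring. Then the relation x ≤ y iff (y ∈ x+1 or y = x) is a partial order on R. -/
universe u

section Aux
variable {α : Type u} (H : Hyperring α)

/-- Adding 1 twice is the same as adding 1 once, when 1+1={1}. -/
lemma step_trans (h11 : H.hadd H.one H.one = {H.one})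
    {x y z : α} (hy : y ∈ H.hadd x H.one) (hz : z ∈ H.hadd y H.one) :
    z ∈ H.hadd x H.one := by
  have hassoc := H.hadd_assoc x H.one H.one
  have hz' : z ∈ ⋃ t ∈ H.hadd x H.one, H.hadd t H.one :=
    Set.mem_biUnion hy hz
  rw [hassoc, h11] at hz'
  simpa using hz'

lemma hr_neg_neg (a : α) : H.neg (H.neg a) = a := by
  have h0 : H.zero ∈ H.hadd (H.neg a) a := by
    rw [H.hadd_comm]; exact H.zero_mem_hadd_neg a
  exact (H.neg_unique _ _ h0).symm

lemma hr_mul_neg_one (a : α) : H.mul a (H.neg H.one) = H.neg a := by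
  have h0 : H.zero ∈ H.hadd H.one (H.neg H.one) := H.zero_mem_hadd_neg H.one
  have him := H.left_distrib a H.one (H.neg H.one)
  have : H.mul a H.zero ∈ H.hadd (H.mul a H.one) (H.mul a (H.neg H.one)) := by
    rw [← him]; exact Set.mem_image_of_mem _ h0
  rw [H.mul_zero, H.mul_one] at this
  exact H.neg_unique _ _ this

/-- If `x ∈ x + 1` then `x = 1` or `x = -1`. -/
lemma self_mem_cases (hS : ContainsS H) {x : α} (hx : x ∈ H.hadd x H.one) :
    x = H.one ∨ x = H.neg H.one := by
  obtain ⟨_, _, _, h1m1⟩ := hS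
  -- 1 ∈ x + (-x)
  have h1 : H.one ∈ H.hadd x (H.neg x) := H.reversible x x H.one hx
  -- x + (-x) = x '' (1 + (-1)) = {-x, 0, x}
  have him := H.left_distrib x H.one (H.neg H.one)
  rw [H.mul_one, hr_mul_neg_one H, h1m1] at him
  rw [← him] at h1
  obtain ⟨s, hs, hsx⟩ := h1
  rcases hs with h | h | h
  · subst h
    rw [hr_mul_neg_one H] at hsx
    right
    calc x = H.neg (H.neg x) := (hr_neg_neg H x).symm
    _ = H.neg H.one := by rw [hsx]
  · subst h
    rw [H.mul_zero] at hsx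
    exact absurd hsx H.zero_ne_one
  · subst h
    rw [H.mul_one] at hsx
    left; exact hsx

end Aux

/-- In a hyperring `R` containing the sign hyperfield `S`, the relation
`x ≤ y ↔ (y ∈ x + 1 ∨ y = x)` is a partial order. -/

theorem stmt17 {α : Type u} (H : Hyperring α) (hS : ContainsS H) :
    (∀ x : α, (x ∈ H.hadd x H.one ∨ x = x)) ∧
    (∀ x y z : α, (y ∈ H.hadd x H.one ∨ y = x) → (z ∈ H.hadd y H.one ∨ z = y) →
      (z ∈ H.hadd x H.one ∨ z = x)) ∧
    ∀ x y : α, (y ∈ H.hadd x H.one ∨ y = x) → (x ∈ H.hadd y H.one ∨ x = y) → x = y := by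

  obtain ⟨hne, h11, hm1m1, h1m1⟩ := hS
  refine ⟨fun x => Or.inr rfl, ?_, ?_⟩
  · rintro x y z (hy | rfl) (hz | rfl)
    · exact Or.inl (step_trans H h11 hy hz)
    · exact Or.inl hy
    · exact Or.inl hz
    · exact Or.inr rfl
  · rintro x y (hy | rfl) (hx | heq)
    · -- y ∈ x+1 and x ∈ y+1
      have hxx : x ∈ H.hadd x H.one := step_trans H h11 hy hx
      have hyy : y ∈ H.hadd y H.one := step_trans H h11 hx hy
      rcases self_mem_cases H ⟨hne, h11, hm1m1, h1m1⟩ hxx with rfl | rfl <;>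
        rcases self_mem_cases H ⟨hne, h11, hm1m1, h1m1⟩ hyy with rfl | rfl
      · rfl
      · rw [h11] at hy; exact absurd hy hne
      · rw [h11] at hx
        exact absurd hx hne
      · rfl
    · exact heq
    · rfl
    · rfl
end
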